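/- Let r > 0, 0 < λ ≤ Λ, and let A be an n×n complex matrix belonging to 𝒜_{λ,Λ}. Then for every ζ ∈ ℂ∖{0} and every ξ ∈ ℂⁿ, H_{F_r}^A[ζ;ξ] ≥ (r²/2)·|ζ|^{r−2}·|ξ|²·Δ_r(A). -/

import Mathlib

open scoped BigOperators ComplexConjugate Matrix

noncomputable section

namespace Paper

/-- The sesquilinear pairing `⟨z,w⟩ = ∑ j, z j * conj (w j)` on `ℂⁿ`. -/
def herm {n : ℕ} (z w : Fin n → ℂ) : ℂ := ∑ j, z j * conj (w j)

/-- Euclidean norm of a complex vector, `|z| = √⟨z,z⟩`. -/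
def cnorm {n : ℕ} (z : Fin n → ℂ) : ℝ := Real.sqrt (herm z z).re

/-- Componentwise complex conjugate of a vector. -/
def vconj {n : ℕ} (z : Fin n → ℂ) : Fin n → ℂ := fun j => conj (z j)

/-- The ℝ-linear map `𝒥_p(α + iβ) = α/p + iβ/q`, where `1/p + 1/q = 1`,
i.e. `1/q = 1 - 1/p`. -/
def Jmap {n : ℕ} (p : ℝ) (ξ : Fin n → ℂ) : Fin n → ℂ :=
  fun j => (((ξ j).re / p : ℝ) : ℂ) + Complex.I * (((ξ j).im * (1 - 1 / p) : ℝ) : ℂ)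

/-- `Δ_p(A) = 2 · min { Re⟨Aξ, 𝒥_p ξ⟩ : ξ ∈ ℂⁿ, |ξ| = 1 }`. -/
def Deltap {n : ℕ} (p : ℝ) (A : Matrix (Fin n) (Fin n) ℂ) : ℝ :=
  sInf {t : ℝ | ∃ ξ : Fin n → ℂ, cnorm ξ = 1 ∧
    t = 2 * (herm (A.mulVec ξ) (Jmap p ξ)).re}

/-- `Δ_r(A) = min { Re⟨Aξ,ξ⟩ − |1 − 2/r|·|⟨Aξ,ξ̄⟩| : |ξ| = 1 }`, the extension of
`Δ_p` to all `r > 0`. -/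
def DeltaGen {n : ℕ} (r : ℝ) (A : Matrix (Fin n) (Fin n) ℂ) : ℝ :=
  sInf {t : ℝ | ∃ ξ : Fin n → ℂ, cnorm ξ = 1 ∧
    t = (herm (A.mulVec ξ) ξ).re - |1 - 2 / r| * ‖herm (A.mulVec ξ) (vconj ξ)‖}

/-- Membership in the class `𝒜_{λ,Λ}`:
`Re⟨Aξ,ξ⟩ ≥ λ|ξ|²` and `|⟨Aξ,η⟩| ≤ Λ|ξ||η|`. -/
def memA {n : ℕ} (lam Lam : ℝ) (A : Matrix (Fin n) (Fin n) ℂ) : Prop :=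
  (∀ ξ : Fin n → ℂ, lam * cnorm ξ ^ 2 ≤ (herm (A.mulVec ξ) ξ).re) ∧
  (∀ ξ η : Fin n → ℂ, ‖herm (A.mulVec ξ) η‖ ≤ Lam * cnorm ξ * cnorm η)

/-- `λ_A = min { Re⟨Aξ,ξ⟩ : |ξ| = 1 }`. -/
def lamA {n : ℕ} (A : Matrix (Fin n) (Fin n) ℂ) : ℝ :=
  sInf {t : ℝ | ∃ ξ : Fin n → ℂ, cnorm ξ = 1 ∧ t = (herm (A.mulVec ξ) ξ).re}

/-- `Λ_A = max { |⟨Aξ,η⟩| : |ξ| = |η| = 1 }`. -/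
def LamA {n : ℕ} (A : Matrix (Fin n) (Fin n) ℂ) : ℝ :=
  sSup {t : ℝ | ∃ ξ η : Fin n → ℂ, cnorm ξ = 1 ∧ cnorm η = 1 ∧
    t = ‖herm (A.mulVec ξ) η‖}

/-- `μ(A) = inf { Re⟨Aξ,ξ⟩/|⟨Aξ,ξ̄⟩| : ⟨Aξ,ξ̄⟩ ≠ 0 }`. -/
def muA {n : ℕ} (A : Matrix (Fin n) (Fin n) ℂ) : ℝ :=
  sInf {t : ℝ | ∃ ξ : Fin n → ℂ, herm (A.mulVec ξ) (vconj ξ) ≠ 0 ∧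
    t = (herm (A.mulVec ξ) ξ).re / ‖herm (A.mulVec ξ) (vconj ξ)‖}

/-- Second real Fréchet derivative of `F : ℂ → ℝ` at `ζ`, as a bilinear expression. -/
def D2 (F : ℂ → ℝ) (ζ : ℂ) (ξ η : ℂ) : ℝ := fderiv ℝ (fderiv ℝ F) ζ ξ η

/-- `F : ℂ → ℝ` is twice real-Fréchet differentiable at `ζ`. -/
def TwiceDiffAt (F : ℂ → ℝ) (ζ : ℂ) : Prop :=
  DifferentiableAt ℝ F ζ ∧ DifferentiableAt ℝ (fderiv ℝ F) ζ

/-- `H_F^A[ζ;ξ] = ∑ j, D²F(ζ)[ξ_j, (Aξ)_j]`. -/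
def HFA {n : ℕ} (F : ℂ → ℝ) (A : Matrix (Fin n) (Fin n) ℂ) (ζ : ℂ) (ξ : Fin n → ℂ) : ℝ :=
  ∑ j, D2 F ζ (ξ j) (A.mulVec ξ j)

/-- The power function `F_r(ζ) = |ζ|^r`. -/
def Fpow (r : ℝ) (ζ : ℂ) : ℝ := ‖ζ‖ ^ r

/-- Real dot product. -/
def rdot {n : ℕ} (u v : Fin n → ℝ) : ℝ := ∑ j, u j * v j

/-- Euclidean norm of a real vector. -/
def enorm {n : ℕ} (u : Fin n → ℝ) : ℝ := Real.sqrt (∑ j, u j ^ 2)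

/-- Operator norm `‖M‖ = max { |Mu| : |u| = 1 }` of a real matrix. -/
def opnormR {n : ℕ} (M : Matrix (Fin n) (Fin n) ℝ) : ℝ :=
  sSup {t : ℝ | ∃ u : Fin n → ℝ, enorm u = 1 ∧ t = enorm (M.mulVec u)}

/-- Symmetric part `M_s = (M + Mᵀ)/2`. -/
def symPart {n : ℕ} {R : Type*} [Field R] (M : Matrix (Fin n) (Fin n) R) :
    Matrix (Fin n) (Fin n) R := (2 : R)⁻¹ • (M + Mᵀ)

/-- Antisymmetric part `M_a = (M − Mᵀ)/2`. -/
def antiPart {n : ℕ} {R : Type*} [Field R] (M : Matrix (Fin n) (Fin n) R) :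
    Matrix (Fin n) (Fin n) R := (2 : R)⁻¹ • (M - Mᵀ)

/-- `𝒱_p(V) = ((p−2)/(2√(p−1)))·V_s + (p/(2√(p−1)))·V_a`. -/
def Vmap {n : ℕ} (p : ℝ) (V : Matrix (Fin n) (Fin n) ℝ) : Matrix (Fin n) (Fin n) ℝ :=
  ((p - 2) / (2 * Real.sqrt (p - 1))) • symPart V + (p / (2 * Real.sqrt (p - 1))) • antiPart V

/-- A real matrix is (symmetric) positive definite. -/
def RPosDef {n : ℕ} (M : Matrix (Fin n) (Fin n) ℝ) : Prop :=
  Mᵀ = M ∧ ∀ u : Fin n → ℝ, u ≠ 0 → 0 < rdot (M.mulVec u) u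

/-- The complex matrix `U + iV` built from two real matrices. -/
def cplx {n : ℕ} (U V : Matrix (Fin n) (Fin n) ℝ) : Matrix (Fin n) (Fin n) ℂ :=
  Matrix.of fun i j => ((U i j : ℂ) + Complex.I * (V i j : ℂ))

/-- `Φ : ℂ×ℂ → ℝ` is twice real-Fréchet differentiable at `v`. -/
def TwiceDiffAt2 (Φ : ℂ × ℂ → ℝ) (v : ℂ × ℂ) : Prop :=
  DifferentiableAt ℝ Φ v ∧ DifferentiableAt ℝ (fderiv ℝ Φ) v

/-- `H_Φ^{(A,B)}[v;ω] = ∑ j, D²Φ(v)[(ω₁ⱼ, ω₂ⱼ), ((Aω₁)ⱼ, (Bω₂)ⱼ)]`. -/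
def HAB {n : ℕ} (Φ : ℂ × ℂ → ℝ) (A B : Matrix (Fin n) (Fin n) ℂ) (v : ℂ × ℂ)
    (ω₁ ω₂ : Fin n → ℂ) : ℝ :=
  ∑ j, fderiv ℝ (fderiv ℝ Φ) v (ω₁ j, ω₂ j) (A.mulVec ω₁ j, B.mulVec ω₂ j)

/-- The Nazarov–Treil Bellman function `Q_{p,δ}` (with `q = p/(p−1)` passed explicitly). -/
def QNT (p q δ : ℝ) (ζ η : ℂ) : ℝ :=
  ‖ζ‖ ^ p + ‖η‖ ^ q +
    δ * (if ‖ζ‖ ^ p ≤ ‖η‖ ^ q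
      then ‖ζ‖ ^ (2 : ℝ) * ‖η‖ ^ (2 - q)
      else (2 / p) * ‖ζ‖ ^ p + (2 / q - 1) * ‖η‖ ^ q)

/-- `Δ_p` of a matrix-valued function on a subset `Ω ⊆ ℝᵐ`:
`2 · essinf_{x∈Ω} min_{|ξ|=1} Re⟨A(x)ξ, 𝒥_p ξ⟩`. -/
def DeltapAE {m n : ℕ} (p : ℝ) (A : (Fin m → ℝ) → Matrix (Fin n) (Fin n) ℂ)
    (Ω : Set (Fin m → ℝ)) : ℝ :=
  2 * essInf (fun x => sInf {t : ℝ | ∃ ξ : Fin n → ℂ, cnorm ξ = 1 ∧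
      t = (herm ((A x).mulVec ξ) (Jmap p ξ)).re}) (MeasureTheory.volume.restrict Ω)

end Paper

/-!
Away from the origin the Hessian of `‖·‖ ^ r` on a real inner product space is
`r ‖ζ‖^(r-2) ⟪u, v⟫ + r (r-2) ‖ζ‖^(r-4) ⟪ζ, u⟫ ⟪ζ, v⟫`. On `ℂ`,
`2 ⟪ζ, u⟫ ⟪ζ, v⟫ = Re (ζ̄² u v) + |ζ|² ⟪u, v⟫`, so summing over coordinates gives
`H = (r²/2) |ζ|^(r-2) Re⟨Aξ,ξ⟩ + (r(r-2)/2) |ζ|^(r-4) Re (ζ̄² ⟨Aξ,ξ̄⟩)`.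
As `|r (r-2)| = r² |1 - 2/r|`, the last term is at least `-(r²/2) |ζ|^(r-2) |1 - 2/r| |⟨Aξ,ξ̄⟩|`,
which leaves `(r²/2) |ζ|^(r-2)` times the quantity minimised in `Δ_r(A)`; that quantity is
homogeneous of degree two in `ξ`, hence at least `|ξ|² Δ_r(A)`.
-/

section NormRpow

open scoped RealInnerProductSpace Topology

variable {E : Type*} [NormedAddCommGroup E] [InnerProductSpace ℝ E] {x : E}

theorem hasFDerivAt_norm_rpow_of_ne_zero (hx : x ≠ 0) (p : ℝ) :
    HasFDerivAt (fun y : E ↦ ‖y‖ ^ p) ((p * ‖x‖ ^ (p - 2)) • innerSL ℝ x) x := by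
  convert! ((hasStrictFDerivAt_norm_sq x).rpow_const (p := p / 2) (by simp [hx])).hasFDerivAt
    using 0
  simp_rw [← Real.rpow_natCast_mul (norm_nonneg _), ← Nat.cast_smul_eq_nsmul ℝ, smul_smul]
  ring_nf

theorem fderiv_fderiv_norm_rpow_apply (hx : x ≠ 0) (p : ℝ) (u v : E) :
    fderiv ℝ (fderiv ℝ fun y : E ↦ ‖y‖ ^ p) x u v =
      p * ‖x‖ ^ (p - 2) * ⟪u, v⟫ + p * (p - 2) * ‖x‖ ^ (p - 4) * (⟪x, u⟫ * ⟪x, v⟫) := by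
  have hfderiv : fderiv ℝ (fun y : E ↦ ‖y‖ ^ p) =ᶠ[𝓝 x]
      fun y ↦ (p * ‖y‖ ^ (p - 2)) • innerSL ℝ y := by
    filter_upwards [isOpen_ne.mem_nhds hx] with y hy
    exact (hasFDerivAt_norm_rpow_of_ne_zero hy p).fderiv
  have hderiv : HasFDerivAt (fun y ↦ (p * ‖y‖ ^ (p - 2)) • innerSL ℝ y) _ x :=
    ((hasFDerivAt_norm_rpow_of_ne_zero hx (p - 2)).const_mul p).smul
      (innerSL ℝ (E := E)).hasFDerivAt
  rw [hfderiv.fderiv_eq, hderiv.fderiv]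
  simp only [show p - 2 - 2 = p - 4 by ring, add_apply, smul_apply,
    ContinuousLinearMap.smulRight_apply, coe_innerSL_apply, smul_eq_mul]
  -- the leftover `innerSL ℝ u v` is `⟪u, v⟫` only up to unfolding, which `simp` does not see
  show p * ‖x‖ ^ (p - 2) * ⟪u, v⟫ + _ = _
  ring

end NormRpow

lemma rpow_sub_four_mul_sq {x : ℝ} (hx : 0 < x) (r : ℝ) : x ^ (r - 4) * x ^ 2 = x ^ (r - 2) := by
  rw [← Real.rpow_natCast, ← Real.rpow_add hx]
  norm_num
  ring_nf

namespace Paper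

section Cnorm

variable {n : ℕ}

lemma cnorm_eq_norm (z : Fin n → ℂ) : cnorm z = ‖WithLp.toLp 2 z‖ := by
  rw [cnorm, EuclideanSpace.norm_eq, herm, Complex.re_sum]
  congr 1
  refine Finset.sum_congr rfl fun j _ => ?_
  rw [Complex.mul_conj, Complex.ofReal_re, Complex.normSq_eq_norm_sq]

lemma cnorm_smul (c : ℂ) (z : Fin n → ℂ) : cnorm (c • z) = ‖c‖ * cnorm z := by
  rw [cnorm_eq_norm, cnorm_eq_norm, WithLp.toLp_smul, norm_smul]

lemma cnorm_eq_zero {z : Fin n → ℂ} : cnorm z = 0 ↔ z = 0 := by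
  rw [cnorm_eq_norm, norm_eq_zero, WithLp.toLp_eq_zero]

lemma cnorm_vconj (z : Fin n → ℂ) : cnorm (vconj z) = cnorm z := by
  simp only [cnorm_eq_norm, EuclideanSpace.norm_eq, vconj, Complex.norm_conj]

lemma herm_smul_left (c : ℂ) (z w : Fin n → ℂ) : herm (c • z) w = c * herm z w := by
  simp only [herm, Finset.mul_sum, Pi.smul_apply, smul_eq_mul, mul_assoc]

lemma herm_smul_right (c : ℂ) (z w : Fin n → ℂ) : herm z (c • w) = conj c * herm z w := by
  simp only [herm, Finset.mul_sum, Pi.smul_apply, smul_eq_mul, map_mul, mul_left_comm]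

lemma vconj_smul (c : ℂ) (z : Fin n → ℂ) : vconj (c • z) = conj c • vconj z := by
  ext j
  simp [vconj]

end Cnorm

def deltaForm {n : ℕ} (r : ℝ) (A : Matrix (Fin n) (Fin n) ℂ) (ξ : Fin n → ℂ) : ℝ :=
  (herm (A *ᵥ ξ) ξ).re - |1 - 2 / r| * ‖herm (A *ᵥ ξ) (vconj ξ)‖

lemma deltaForm_smul {n : ℕ} (r : ℝ) (A : Matrix (Fin n) (Fin n) ℂ) (c : ℂ) (ξ : Fin n → ℂ) :
    deltaForm r A (c • ξ) = ‖c‖ ^ 2 * deltaForm r A ξ := by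
  have hself : conj c * c = ((‖c‖ ^ 2 : ℝ) : ℂ) := by
    rw [mul_comm, Complex.mul_conj, Complex.normSq_eq_norm_sq]
  simp only [deltaForm, Matrix.mulVec_smul, vconj_smul, herm_smul_left, herm_smul_right,
    Complex.conj_conj, ← mul_assoc, hself, Complex.re_ofReal_mul, norm_mul]
  ring

lemma bddBelow_deltaForm {n : ℕ} {Lam : ℝ} (r : ℝ) {A : Matrix (Fin n) (Fin n) ℂ}
    (hA : ∀ ξ η : Fin n → ℂ, ‖herm (A *ᵥ ξ) η‖ ≤ Lam * cnorm ξ * cnorm η) :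
    BddBelow {t : ℝ | ∃ ξ : Fin n → ℂ, cnorm ξ = 1 ∧ t = deltaForm r A ξ} := by
  refine ⟨-Lam - |1 - 2 / r| * Lam, ?_⟩
  rintro _ ⟨ξ, hξ, rfl⟩
  have hself : ‖herm (A *ᵥ ξ) ξ‖ ≤ Lam := by simpa [hξ] using hA ξ ξ
  have hconj : ‖herm (A *ᵥ ξ) (vconj ξ)‖ ≤ Lam := by
    simpa [hξ, cnorm_vconj] using hA ξ (vconj ξ)
  have hre := neg_le_of_abs_le (Complex.abs_re_le_norm (herm (A *ᵥ ξ) ξ))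
  have := mul_le_mul_of_nonneg_left hconj (abs_nonneg (1 - 2 / r))
  rw [deltaForm]
  linarith

lemma sq_cnorm_mul_DeltaGen_le {n : ℕ} {Lam : ℝ} (r : ℝ) {A : Matrix (Fin n) (Fin n) ℂ}
    (hA : ∀ ξ η : Fin n → ℂ, ‖herm (A *ᵥ ξ) η‖ ≤ Lam * cnorm ξ * cnorm η) (ξ : Fin n → ℂ) :
    cnorm ξ ^ 2 * DeltaGen r A ≤ deltaForm r A ξ := by
  rcases eq_or_ne ξ 0 with rfl | hξ
  · simp [deltaForm, herm, cnorm_eq_zero.2 rfl]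
  have hpos : 0 < cnorm ξ := (cnorm_eq_norm ξ ▸ norm_nonneg _).lt_of_ne' (mt cnorm_eq_zero.1 hξ)
  have hnorm : ‖(((cnorm ξ)⁻¹ : ℝ) : ℂ)‖ = (cnorm ξ)⁻¹ := by
    rw [Complex.norm_real, Real.norm_of_nonneg (inv_nonneg.2 hpos.le)]
  have hunit : cnorm ((((cnorm ξ)⁻¹ : ℝ) : ℂ) • ξ) = 1 := by
    rw [cnorm_smul, hnorm, inv_mul_cancel₀ hpos.ne']
  have hle : DeltaGen r A ≤ (cnorm ξ)⁻¹ ^ 2 * deltaForm r A ξ := by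
    rw [← hnorm, ← deltaForm_smul]
    exact csInf_le (bddBelow_deltaForm r hA) ⟨_, hunit, rfl⟩
  calc cnorm ξ ^ 2 * DeltaGen r A ≤ cnorm ξ ^ 2 * ((cnorm ξ)⁻¹ ^ 2 * deltaForm r A ξ) := by
        gcongr
    _ = deltaForm r A ξ := by field_simp

section Hessian

open scoped RealInnerProductSpace

variable {r : ℝ} {ζ : ℂ}

lemma D2_Fpow_eq (hζ : ζ ≠ 0) (u v : ℂ) :
    D2 (Fpow r) ζ u v = r ^ 2 / 2 * ‖ζ‖ ^ (r - 2) * ⟪u, v⟫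
      + r * (r - 2) / 2 * ‖ζ‖ ^ (r - 4) * (conj ζ ^ 2 * (u * v)).re := by
  have hquad : 2 * (⟪ζ, u⟫ * ⟪ζ, v⟫) = (conj ζ ^ 2 * (u * v)).re + ‖ζ‖ ^ 2 * ⟪u, v⟫ := by
    rw [Complex.sq_norm, Complex.normSq_apply]
    simp only [Complex.inner, Complex.mul_re, Complex.mul_im, Complex.conj_re, Complex.conj_im, sq]
    ring
  have hpow := rpow_sub_four_mul_sq (norm_pos_iff.2 hζ) r
  unfold D2 Fpow
  rw [fderiv_fderiv_norm_rpow_apply hζ]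
  linear_combination (r * (r - 2) / 2 * ‖ζ‖ ^ (r - 4)) * hquad + (r * (r - 2) / 2 * ⟪u, v⟫) * hpow

lemma HFA_Fpow_eq {n : ℕ} (hζ : ζ ≠ 0) (A : Matrix (Fin n) (Fin n) ℂ) (ξ : Fin n → ℂ) :
    HFA (Fpow r) A ζ ξ = r ^ 2 / 2 * ‖ζ‖ ^ (r - 2) * (herm (A *ᵥ ξ) ξ).re
      + r * (r - 2) / 2 * ‖ζ‖ ^ (r - 4) * (conj ζ ^ 2 * herm (A *ᵥ ξ) (vconj ξ)).re := by
  simp only [HFA, D2_Fpow_eq hζ, Finset.sum_add_distrib, ← Finset.mul_sum, herm, vconj,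
    Complex.re_sum, Complex.inner, Complex.conj_conj, mul_comm (ξ _)]
  rw [Finset.mul_sum (a := conj ζ ^ 2), Complex.re_sum]

lemma neg_mul_abs_le_re_conj_sq_mul (hζ : ζ ≠ 0) (w : ℂ) :
    -(r ^ 2 / 2 * ‖ζ‖ ^ (r - 2) * (|1 - 2 / r| * ‖w‖))
      ≤ r * (r - 2) / 2 * ‖ζ‖ ^ (r - 4) * (conj ζ ^ 2 * w).re := by
  -- true at `r = 0` as well, since `2 / 0 = 0`
  have hcoef : r ^ 2 * |1 - 2 / r| = |r * (r - 2)| := by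
    rcases eq_or_ne r 0 with rfl | hr
    · simp
    · rw [← abs_of_nonneg (sq_nonneg r), ← abs_mul]
      congr 1
      field_simp
  have hpow := rpow_sub_four_mul_sq (norm_pos_iff.2 hζ) r
  have hre : |(conj ζ ^ 2 * w).re| ≤ ‖ζ‖ ^ 2 * ‖w‖ := by
    have := Complex.abs_re_le_norm (conj ζ ^ 2 * w)
    rwa [norm_mul, norm_pow, Complex.norm_conj] at this
  calc -(r ^ 2 / 2 * ‖ζ‖ ^ (r - 2) * (|1 - 2 / r| * ‖w‖))
      = -(|r * (r - 2) / 2 * ‖ζ‖ ^ (r - 4)| * (‖ζ‖ ^ 2 * ‖w‖)) := by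
        rw [abs_mul, abs_div, ← hcoef, abs_two,
          abs_of_nonneg (Real.rpow_nonneg (norm_nonneg ζ) (r - 4)), ← hpow]
        ring
    _ ≤ -|r * (r - 2) / 2 * ‖ζ‖ ^ (r - 4) * (conj ζ ^ 2 * w).re| := by
        rw [abs_mul _ (conj ζ ^ 2 * w).re]
        gcongr
    _ ≤ _ := neg_abs_le _

lemma mul_deltaForm_le_HFA_Fpow {n : ℕ} (hζ : ζ ≠ 0)
    (A : Matrix (Fin n) (Fin n) ℂ) (ξ : Fin n → ℂ) :
    r ^ 2 / 2 * ‖ζ‖ ^ (r - 2) * deltaForm r A ξ ≤ HFA (Fpow r) A ζ ξ := by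
  rw [HFA_Fpow_eq hζ, deltaForm]
  linarith [neg_mul_abs_le_re_conj_sq_mul (r := r) hζ (herm (A *ᵥ ξ) (vconj ξ))]

end Hessian

end Paper

theorem statement4_general (n : ℕ) (r lam Lam : ℝ)
    (A : Matrix (Fin n) (Fin n) ℂ) (hA : Paper.memA lam Lam A)
    (ζ : ℂ) (hζ : ζ ≠ 0) (ξ : Fin n → ℂ) :
    (r ^ 2 / 2) * ‖ζ‖ ^ (r - 2) * Paper.cnorm ξ ^ 2 * Paper.DeltaGen r A
      ≤ Paper.HFA (Paper.Fpow r) A ζ ξ :=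
  calc (r ^ 2 / 2) * ‖ζ‖ ^ (r - 2) * Paper.cnorm ξ ^ 2 * Paper.DeltaGen r A
      = r ^ 2 / 2 * ‖ζ‖ ^ (r - 2) * (Paper.cnorm ξ ^ 2 * Paper.DeltaGen r A) := by ring
    _ ≤ r ^ 2 / 2 * ‖ζ‖ ^ (r - 2) * Paper.deltaForm r A ξ := by
        gcongr
        exact Paper.sq_cnorm_mul_DeltaGen_le r hA.2 ξ
    _ ≤ Paper.HFA (Paper.Fpow r) A ζ ξ := Paper.mul_deltaForm_le_HFA_Fpow hζ A ξ

/-- `H_{F_r}^A[ζ;ξ] ≥ (r²/2)|ζ|^{r−2}|ξ|²·Δ_r(A)`. -/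
theorem statement4 (n : ℕ) (r lam Lam : ℝ) (hr : 0 < r)
    (hlam : 0 < lam) (hLam : lam ≤ Lam)
    (A : Matrix (Fin n) (Fin n) ℂ) (hA : Paper.memA lam Lam A)
    (ζ : ℂ) (hζ : ζ ≠ 0) (ξ : Fin n → ℂ) :
    (r ^ 2 / 2) * ‖ζ‖ ^ (r - 2) * Paper.cnorm ξ ^ 2 * Paper.DeltaGen r A
      ≤ Paper.HFA (Paper.Fpow r) A ζ ξ :=
  statement4_general n r lam Lam A hA ζ hζ ξ
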